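/- arXiv:0902.1327 — 3 statements merged into one kernel-verified Lean document; each statement's English description precedes it below -/
import Mathlib

section
/- Let f be an isolate-indifferent graph parameter, let F₀ be a graph on vertex set [n-1], and consider the sum over all graphs F on [n] whose restriction to [n-1] equals F₀ of f†(F). Then this sum equals f†(F₀). Equivalently, ∑_{F: F∖{n}=F₀} f†(F) = f†(F₀). -/
open scoped Classical

noncomputable def mobiusT (f : ∀ n, SimpleGraph (Fin n) → ℝ) {n : ℕ} (F : SimpleGraph (Fin n)) : ℝ :=
  ∑ F' : SimpleGraph (Fin n),
    if F ≤ F' then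
      (-1 : ℝ) ^ (Nat.card (F'.edgeSet \ F.edgeSet : Set (Sym2 (Fin n)))) * f n F'
    else 0

def IsoInvariant (f : ∀ n, SimpleGraph (Fin n) → ℝ) : Prop :=
  ∀ (n : ℕ) (G G' : SimpleGraph (Fin n)), Nonempty (G ≃g G') → f n G = f n G'

def IsolateIndifferent (f : ∀ n, SimpleGraph (Fin n) → ℝ) : Prop :=
  IsoInvariant f ∧ ∀ (n : ℕ) (G : SimpleGraph (Fin n)),
    f (n + 1) (G.map Fin.castSuccEmb) = f n G

def Normalized (f : ∀ n, SimpleGraph (Fin n) → ℝ) : Prop :=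
  f 0 ⊥ = 1 ∧ f 1 ⊥ = 1

/-!
A graph on `[n+1]` is the same as a graph `G` on `[n]` together with the neighbourhood `S ⊆ [n]`
of the last vertex; this correspondence is monotone in both directions and adds edge counts.
Since `(-1)^|E(F') ∖ E(F)| = (-1)^|E(F)| (-1)^|E(F')|` for `F ≤ F'`, summing `f†(F)` over the
extensions `F` of `F₀` produces, for each `F' ↔ (G', S')`, the factor `∑_{S ⊆ S'} (-1)^|S|`, which
vanishes unless `S' = ∅`. What remains is the Möbius transform of `F₀` with `f` evaluated at
`G'` plus an isolated vertex, which is `f(G')` by isolate-indifference.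
-/

open Finset SimpleGraph

theorem Set.neg_one_pow_ncard_sdiff {α R : Type*} [Ring R] {s t : Set α} (hts : t ⊆ s)
    (hs : s.Finite) : (-1 : R) ^ (s \ t).ncard = (-1) ^ s.ncard * (-1) ^ t.ncard := by
  rw [← Set.ncard_sdiff_add_ncard_of_subset hts hs, pow_add, mul_assoc, ← pow_add, ← two_mul,
    pow_mul]
  simp

theorem Finset.sum_neg_one_pow_card_mul_sum_superset {α R : Type*} [Fintype α] [DecidableEq α]
    [CommRing R] (h : Finset α → R) :
    ∑ S : Finset α, (-1) ^ #S * ∑ T : Finset α, (if S ⊆ T then (-1) ^ #T * h T else 0) = h ∅ := by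
  have inner (T : Finset α) :
      ∑ S : Finset α, (-1 : R) ^ #S * (if S ⊆ T then (-1) ^ #T * h T else 0)
        = if T = ∅ then h T else 0 := by
    have hsign := congrArg (Int.cast : ℤ → R) (sum_powerset_neg_one_pow_card (x := T))
    push_cast at hsign
    simp_rw [mul_ite, mul_zero]
    rw [← sum_filter, filter_subset_univ, ← sum_mul, hsign]
    split_ifs with hT <;> simp [hT]
  simp_rw [mul_sum]
  rw [sum_comm]
  simp only [inner, sum_ite_eq', mem_univ, if_true]

theorem mobiusT_eq_neg_one_pow_mul (f : ∀ n, SimpleGraph (Fin n) → ℝ) {n : ℕ}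
    (F : SimpleGraph (Fin n)) :
    mobiusT f F = (-1) ^ F.edgeSet.ncard *
      ∑ F' : SimpleGraph (Fin n), if F ≤ F' then (-1) ^ F'.edgeSet.ncard * f n F' else 0 := by
  rw [mobiusT, mul_sum]
  refine sum_congr rfl fun F' _ => ?_
  split_ifs with h
  · rw [Nat.card_coe_set_eq, Set.neg_one_pow_ncard_sdiff (edgeSet_mono h) (Set.toFinite _)]
    ring
  · rw [mul_zero]

namespace SimpleGraph

variable {n : ℕ}

def extendLast (G : SimpleGraph (Fin n)) (S : Finset (Fin n)) : SimpleGraph (Fin (n + 1)) :=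
  G.map Fin.castSuccEmb ⊔ fromEdgeSet ((fun x : Fin n => s(x.castSucc, Fin.last n)) '' S)

theorem extendLast_adj_castSucc {G : SimpleGraph (Fin n)} {S : Finset (Fin n)} {x y : Fin n} :
    (extendLast G S).Adj x.castSucc y.castSucc ↔ G.Adj x y := by
  rw [extendLast, sup_adj, ← Fin.coe_castSuccEmb, map_adj_apply]
  simp [eq_comm (a := Fin.last n)]

theorem extendLast_adj_last {G : SimpleGraph (Fin n)} {S : Finset (Fin n)} {x : Fin n} :
    (extendLast G S).Adj x.castSucc (Fin.last n) ↔ x ∈ S := by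
  rw [extendLast, sup_adj, map_adj]
  simp

theorem comap_extendLast (G : SimpleGraph (Fin n)) (S : Finset (Fin n)) :
    (extendLast G S).comap Fin.castSucc = G := by
  ext x y
  exact extendLast_adj_castSucc

theorem extendLast_empty (G : SimpleGraph (Fin n)) : extendLast G ∅ = G.map Fin.castSuccEmb := by
  simp [extendLast]

theorem extendLast_le_extendLast_iff {G G' : SimpleGraph (Fin n)} {S S' : Finset (Fin n)} :
    extendLast G S ≤ extendLast G' S' ↔ G ≤ G' ∧ S ⊆ S' := by
  constructor
  · intro h
    exact ⟨fun x y hxy => extendLast_adj_castSucc.1 (h (extendLast_adj_castSucc.2 hxy)),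
      fun x hx => extendLast_adj_last.1 (h (extendLast_adj_last.2 hx))⟩
  · rintro ⟨hG, hS⟩
    exact sup_le_sup (map_monotone _ hG) (fromEdgeSet_mono (Set.image_mono (coe_subset.2 hS)))

theorem ncard_edgeSet_extendLast (G : SimpleGraph (Fin n)) (S : Finset (Fin n)) :
    (extendLast G S).edgeSet.ncard = G.edgeSet.ncard + #S := by
  set star := (fun x : Fin n => s(x.castSucc, Fin.last n)) '' S
  have star_inj : Function.Injective fun x : Fin n => s(x.castSucc, Fin.last n) := by
    intro x y h
    simpa using h
  have star_offDiag : Disjoint star Sym2.diagSet :=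
    Set.disjoint_left.2 (by rintro _ ⟨x, -, rfl⟩; simp)
  have map_star : Disjoint (Fin.castSuccEmb.sym2Map '' G.edgeSet) star := by
    refine Set.disjoint_left.2 ?_
    rintro _ ⟨e, -, rfl⟩ ⟨x, -, hx⟩
    induction e using Sym2.ind
    simp [eq_comm (a := Fin.last n)] at hx
  rw [extendLast, edgeSet_sup, edgeSet_map, edgeSet_fromEdgeSet, star_offDiag.sdiff_eq_left,
    Set.ncard_union_eq map_star, Set.ncard_image_of_injective _ (Function.Embedding.injective _),
    Set.ncard_image_of_injective _ star_inj, Set.ncard_coe_finset]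

noncomputable def extendLastEquiv :
    SimpleGraph (Fin n) × Finset (Fin n) ≃ SimpleGraph (Fin (n + 1)) where
  toFun p := extendLast p.1 p.2
  invFun F := (F.comap Fin.castSucc, ({x | F.Adj x.castSucc (Fin.last n)} : Finset (Fin n)))
  left_inv := fun ⟨G, S⟩ => by simp [comap_extendLast, extendLast_adj_last]
  right_inv F := by
    ext a b
    induction a using Fin.lastCases <;> induction b using Fin.lastCases
    · simp
    · simp [adj_comm _ (Fin.last n), extendLast_adj_last]
    · simp [extendLast_adj_last]
    · simp [extendLast_adj_castSucc]

theorem sum_extendLast {M : Type*} [AddCommMonoid M] (g : SimpleGraph (Fin (n + 1)) → M) :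
    ∑ F, g F = ∑ G, ∑ S, g (extendLast G S) := by
  rw [← extendLastEquiv.sum_comp, Fintype.sum_prod_type]
  rfl

end SimpleGraph

theorem mobiusT_extendLast (f : ∀ n, SimpleGraph (Fin n) → ℝ) {n : ℕ} (G : SimpleGraph (Fin n))
    (S : Finset (Fin n)) :
    mobiusT f (extendLast G S) = (-1) ^ G.edgeSet.ncard * ((-1) ^ #S *
      ∑ T : Finset (Fin n), if S ⊆ T then (-1) ^ #T *
        ∑ G' : SimpleGraph (Fin n),
          (if G ≤ G' then (-1) ^ G'.edgeSet.ncard * f (n + 1) (extendLast G' T) else 0)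
      else 0) := by
  rw [mobiusT_eq_neg_one_pow_mul, sum_extendLast, ncard_edgeSet_extendLast, pow_add, mul_assoc,
    sum_comm]
  congr 2
  refine sum_congr rfl fun T _ => ?_
  simp only [extendLast_le_extendLast_iff, ncard_edgeSet_extendLast]
  split_ifs with hST
  · simp only [hST, and_true, mul_sum]
    refine sum_congr rfl fun G' _ => ?_
    split_ifs <;> ring
  · simp [hST]

/-- For an isolate-indifferent graph parameter, summing the Möbius transform over all graphs
on `[n+1]` whose restriction to the first `n` vertices is `F₀` gives the Möbius transform
of `F₀`. -/
theorem mobius_sum_restrict (f : ∀ n, SimpleGraph (Fin n) → ℝ)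
    (hii : IsolateIndifferent f) (n : ℕ) (F₀ : SimpleGraph (Fin n)) :
    ∑ F : SimpleGraph (Fin (n + 1)),
      (if SimpleGraph.comap Fin.castSucc F = F₀ then mobiusT f F else 0) = mobiusT f F₀ := by
  calc _ = ∑ S : Finset (Fin n), mobiusT f (extendLast F₀ S) := by
        simp only [sum_extendLast, comap_extendLast]
        rw [sum_comm]
        simp
    _ = (-1) ^ F₀.edgeSet.ncard * ∑ G' : SimpleGraph (Fin n),
          if F₀ ≤ G' then (-1) ^ G'.edgeSet.ncard * f (n + 1) (extendLast G' ∅) else 0 := by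
        simp only [mobiusT_extendLast, ← mul_sum, sum_neg_one_pow_card_mul_sum_superset]
    _ = mobiusT f F₀ := by
        simp only [mobiusT_eq_neg_one_pow_mul, extendLast_empty, hii.2]
end

section
/- Let f be a graph parameter whose Möbius transform f† is nonnegative, with f isolate-indifferent and normalized. Then defining P(Gₙ = F) = f†(F) for graphs F on [n] gives a probability distribution on graphs with vertex set [n] (i.e., all values are nonnegative and they sum to 1), and f(F) = P(F ⊆ Gₙ) for every graph F on [n]. -/
/-!
Expanding `∑_{F' ⊇ F} f†(F')` and exchanging the sums, the coefficient of `f(H)` is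
`∑_{F ≤ F' ≤ H} (-1)^{|E(H) ∖ E(F')|}`. Through `F' ↦ H ∖ F'` this is the alternating sum over the
edge subsets of `H ∖ F`, which vanishes unless `F = H`. Hence `f(F) = ∑_{F' ⊇ F} f†(F')`, and for
edgeless `F` the total mass is the value of `f` on the edgeless graph on `[n]`, which equals
`f(K₀) = 1` because adding isolated vertices does not change `f`.
-/

open scoped Classical

open Finset

namespace SimpleGraph

variable {V : Type*} [Fintype V] [DecidableEq V]

theorem sum_le_neg_one_pow_card_edgeSet {R : Type*} [Ring R] (D : SimpleGraph V) :
    (∑ K : SimpleGraph V, if K ≤ D then (-1 : R) ^ Nat.card K.edgeSet else 0)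
      = if D = ⊥ then 1 else 0 := by
  have hpowerset : ∑ K ∈ univ.filter (· ≤ D), (-1 : R) ^ Nat.card K.edgeSet
      = ∑ t ∈ D.edgeFinset.powerset, (-1 : R) ^ #t := by
    refine sum_nbij (fun K => K.edgeFinset) ?_ ?_ ?_ ?_
    · intro K hK
      simpa [edgeFinset_subset_edgeFinset] using hK
    · intro K _ K' _ h
      exact edgeFinset_inj.mp h
    · intro t ht
      have htD : (t : Set (Sym2 V)) ⊆ D.edgeSet := by
        simpa [← coe_subset, coe_edgeFinset] using mem_powerset.mp ht
      refine ⟨fromEdgeSet t, ?_, ?_⟩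
      · simpa using htD.trans Set.subset_union_right
      · apply coe_injective
        rw [coe_edgeFinset, edgeSet_fromEdgeSet, sdiff_eq_left]
        exact Set.subset_compl_iff_disjoint_right.mp (htD.trans D.edgeSet_subset_compl_diagSet)
    · intro K _
      rw [Nat.card_eq_fintype_card, ← edgeFinset_card]
  rw [← sum_filter, hpowerset]
  have := congrArg (Int.cast : ℤ → R) (sum_powerset_neg_one_pow_card (x := D.edgeFinset))
  push_cast at this
  simpa [edgeFinset_eq_empty] using this

theorem sum_Icc_neg_one_pow_card_edgeSet_sdiff {R : Type*} [Ring R] (F H : SimpleGraph V) :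
    (∑ F' : SimpleGraph V, if F ≤ F' ∧ F' ≤ H then
        (-1 : R) ^ Nat.card ↥(H.edgeSet \ F'.edgeSet) else 0)
      = if F = H then 1 else 0 := by
  by_cases hFH : F ≤ H
  · have hcompl : ∑ F' ∈ univ.filter (fun F' => F ≤ F' ∧ F' ≤ H),
          (-1 : R) ^ Nat.card ↥(H.edgeSet \ F'.edgeSet)
        = ∑ K ∈ univ.filter (· ≤ H \ F), (-1 : R) ^ Nat.card K.edgeSet := by
      refine sum_nbij' (H \ ·) (H \ ·) ?_ ?_ ?_ ?_ ?_
      · intro F' hF'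
        simp only [mem_filter, mem_univ, true_and] at hF' ⊢
        exact sdiff_le_sdiff_left hF'.1
      · intro K hK
        simp only [mem_filter, mem_univ, true_and] at hK ⊢
        exact ⟨le_sdiff.mpr ⟨hFH, (le_sdiff.mp hK).2.symm⟩, sdiff_le⟩
      · intro F' hF'
        simp only [mem_filter, mem_univ, true_and] at hF'
        simp [sdiff_sdiff_right_self, hF'.2]
      · intro K hK
        simp only [mem_filter, mem_univ, true_and] at hK
        simp [sdiff_sdiff_right_self, (le_sdiff.mp hK).1]
      · intro F' _
        rw [edgeSet_sdiff]
    rw [← sum_filter, hcompl, sum_filter, sum_le_neg_one_pow_card_edgeSet, sdiff_eq_bot_iff]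
    exact if_congr ⟨fun h => le_antisymm hFH h, fun h => h ▸ le_rfl⟩ rfl rfl
  · rw [if_neg (by rintro rfl; exact hFH le_rfl)]
    exact sum_eq_zero fun F' _ => if_neg fun h => hFH (h.1.trans h.2)

end SimpleGraph

theorem mobiusT_inversion (f : ∀ n, SimpleGraph (Fin n) → ℝ) {n : ℕ} (F : SimpleGraph (Fin n)) :
    (∑ F' : SimpleGraph (Fin n), if F ≤ F' then mobiusT f F' else 0) = f n F := by
  calc (∑ F' : SimpleGraph (Fin n), if F ≤ F' then mobiusT f F' else 0)
      = ∑ F', ∑ H : SimpleGraph (Fin n), if F ≤ F' ∧ F' ≤ H then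
          (-1 : ℝ) ^ Nat.card ↥(H.edgeSet \ F'.edgeSet) * f n H else 0 := by
        refine sum_congr rfl fun F' _ => ?_
        split_ifs with hF' <;> simp [mobiusT, hF']
    _ = ∑ H, (if F = H then 1 else 0) * f n H := by
        rw [sum_comm]
        refine sum_congr rfl fun H _ => ?_
        rw [← SimpleGraph.sum_Icc_neg_one_pow_card_edgeSet_sdiff F H, sum_mul]
        exact sum_congr rfl fun F' _ => by split_ifs <;> simp
    _ = f n F := by simp

theorem IsolateIndifferent.apply_bot {f : ∀ n, SimpleGraph (Fin n) → ℝ}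
    (hii : IsolateIndifferent f) (hf₀ : f 0 ⊥ = 1) : ∀ n, f n ⊥ = 1
  | 0 => hf₀
  | n + 1 => by
    have hbot : (⊥ : SimpleGraph (Fin n)).map Fin.castSuccEmb = ⊥ := by
      ext; simp only [SimpleGraph.map_adj, SimpleGraph.bot_adj]; simp
    rw [← hbot, hii.2, hii.apply_bot hf₀ n]

/-- For an isolate-indifferent, normalized graph parameter with nonnegative Möbius transform,
`P(Gₙ = F) = f†(F)` is a probability distribution on graphs on `[n]` and
`f(F) = P(F ⊆ Gₙ)`. -/
theorem mobius_prob_dist (f : ∀ n, SimpleGraph (Fin n) → ℝ)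
    (hii : IsolateIndifferent f) (hnorm : Normalized f)
    (hmob : ∀ (n : ℕ) (F : SimpleGraph (Fin n)), 0 ≤ mobiusT f F) (n : ℕ) :
    (∀ F : SimpleGraph (Fin n), 0 ≤ mobiusT f F) ∧
    (∑ F : SimpleGraph (Fin n), mobiusT f F = 1) ∧
    (∀ F : SimpleGraph (Fin n),
      f n F = ∑ F' : SimpleGraph (Fin n), if F ≤ F' then mobiusT f F' else 0) := by
  refine ⟨hmob n, ?_, fun F => (mobiusT_inversion f F).symm⟩
  simpa using (mobiusT_inversion f (⊥ : SimpleGraph (Fin n))).trans (hii.apply_bot hnorm.1 n)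
end

section
/- Let f be an isolate-indifferent normalized graph parameter. Then f has nonnegative Möbius transform if and only if f is flatly reflection positive (i.e., all flat connection matrices M_flat(f,k) are positive semidefinite). -/
/-!
By Möbius inversion on the Boolean lattice of graphs on `Fin k`, `f (F₁ ⊔ F₂)` is the sum of
`mobiusT f G` over all `G` lying above both `F₁` and `F₂`. Hence the flat connection matrix factors
as `Z * diagonal (mobiusT f) * Zᴴ` with `Z` the zeta matrix of that lattice. The zeta matrix of a
finite poset is invertible, its inverse being the Möbius function, so this congruence preserves
positive semidefiniteness in both directions, and a diagonal matrix is positive semidefinite iff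
its entries are nonnegative.
-/

open scoped Classical

open Finset Matrix

def zetaMatrix (R α : Type*) [LE α] [DecidableLE α] [Zero R] [One R] : Matrix α α R :=
  of fun a b => if a ≤ b then 1 else 0

section ZetaMatrix

variable {R α : Type*} [Fintype α] [PartialOrder α] [DecidableLE α] [DecidableEq α]

theorem zetaMatrix_mul_mu [Ring R] [LocallyFiniteOrder α] :
    zetaMatrix R α * of (IncidenceAlgebra.mu R) = 1 := by
  ext a b
  rw [mul_apply, one_apply, ← IncidenceAlgebra.sum_Icc_mu_left]
  simp only [zetaMatrix, of_apply, ite_mul, one_mul, zero_mul, ← sum_filter]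
  refine (sum_subset (fun c hc => ?_) fun c _ hc => ?_).symm
  · simp_all
  · exact IncidenceAlgebra.apply_eq_zero_of_not_le (by simp_all) _

theorem mu_mul_zetaMatrix [Ring R] [LocallyFiniteOrder α] :
    of (IncidenceAlgebra.mu R) * zetaMatrix R α = 1 := by
  ext a b
  rw [mul_apply, one_apply, ← IncidenceAlgebra.sum_Icc_mu_right]
  simp only [zetaMatrix, of_apply, mul_ite, mul_one, mul_zero, ← sum_filter]
  refine (sum_subset (fun c hc => ?_) fun c _ hc => ?_).symm
  · simp_all
  · exact IncidenceAlgebra.apply_eq_zero_of_not_le (by simp_all) _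

theorem isUnit_zetaMatrix [Ring R] : IsUnit (zetaMatrix R α) :=
  let := Fintype.toLocallyFiniteOrder (α := α)
  ⟨⟨_, _, zetaMatrix_mul_mu, mu_mul_zetaMatrix⟩, rfl⟩

theorem posSemidef_zetaMatrix_mul_diagonal_mul_conjTranspose_iff [Ring R] [PartialOrder R]
    [StarRing R] [StarOrderedRing R] {g : α → R} :
    (zetaMatrix R α * diagonal g * (zetaMatrix R α)ᴴ).PosSemidef ↔ ∀ a, 0 ≤ g a :=
  isUnit_zetaMatrix.posSemidef_star_right_conjugate_iff.trans posSemidef_diagonal_iff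

theorem zetaMatrix_mul_diagonal_mul_conjTranspose_apply [Semiring R] [StarRing R] (g : α → R)
    (a b : α) :
    (zetaMatrix R α * diagonal g * (zetaMatrix R α)ᴴ) a b = ∑ c with a ≤ c ∧ b ≤ c, g c := by
  rw [mul_apply, sum_filter]
  refine sum_congr rfl fun c _ => ?_
  by_cases a ≤ c <;> by_cases b ≤ c <;> simp [zetaMatrix, mul_diagonal, *]

end ZetaMatrix

namespace SimpleGraph

theorem sum_neg_one_pow_card_edgeFinset_sdiff {V : Type*} [Fintype V] (F G : SimpleGraph V) :
    ∑ H with F ≤ H ∧ H ≤ G, (-1 : ℝ) ^ #(G.edgeFinset \ H.edgeFinset) =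
      if F = G then 1 else 0 := by
  by_cases hFG : F ≤ G
  swap
  · rw [if_neg (fun h => hFG h.le), sum_eq_zero]
    intro H hH
    exact absurd ((mem_filter.1 hH).2.elim le_trans) hFG
  have reindex : ∑ H with F ≤ H ∧ H ≤ G, (-1 : ℝ) ^ #(G.edgeFinset \ H.edgeFinset) =
      ∑ t ∈ (G.edgeFinset \ F.edgeFinset).powerset, (-1 : ℝ) ^ #t := by
    refine sum_nbij' (fun H => G.edgeFinset \ H.edgeFinset) (fun t => G.deleteEdges t)
      (fun H hH => ?_) (fun t ht => ?_) (fun H hH => ?_) (fun t ht => ?_) fun _ _ => rfl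
    · simp only [mem_filter, mem_univ, true_and] at hH
      exact mem_powerset.2 (sdiff_subset_sdiff subset_rfl (edgeFinset_mono hH.1))
    · simp only [mem_filter, mem_univ, true_and, ← edgeFinset_subset_edgeFinset,
        edgeFinset_deleteEdges]
      exact ⟨subset_sdiff.2 ⟨edgeFinset_mono hFG, disjoint_sdiff.mono_right (mem_powerset.1 ht)⟩,
        sdiff_subset⟩
    · simp only [mem_filter, mem_univ, true_and] at hH
      rw [← edgeFinset_inj, edgeFinset_deleteEdges,
        _root_.sdiff_sdiff_eq_self (edgeFinset_mono hH.2)]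
    · rw [edgeFinset_deleteEdges,
        _root_.sdiff_sdiff_eq_self ((mem_powerset.1 ht).trans sdiff_subset)]
  have sdiff_eq_empty : G.edgeFinset \ F.edgeFinset = ∅ ↔ F = G := by
    rw [sdiff_eq_empty_iff_subset, edgeFinset_subset_edgeFinset]
    exact ⟨hFG.antisymm, fun h => h ▸ le_rfl⟩
  rw [reindex, ← sdiff_eq_empty]
  exact_mod_cast sum_powerset_neg_one_pow_card

end SimpleGraph

open SimpleGraph

theorem mobiusT_eq_sum (f : ∀ n, SimpleGraph (Fin n) → ℝ) {n : ℕ} (F : SimpleGraph (Fin n)) :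
    mobiusT f F = ∑ F' with F ≤ F', (-1 : ℝ) ^ #(F'.edgeFinset \ F.edgeFinset) * f n F' := by
  rw [mobiusT, sum_filter]
  refine sum_congr rfl fun F' _ => ?_
  rw [← coe_edgeFinset, ← coe_edgeFinset, ← coe_sdiff, Nat.card_coe_set_eq, Set.ncard_coe_finset]

theorem sum_ge_mobiusT_eq (f : ∀ n, SimpleGraph (Fin n) → ℝ) {n : ℕ} (F : SimpleGraph (Fin n)) :
    ∑ G with F ≤ G, mobiusT f G = f n F := by
  calc ∑ G with F ≤ G, mobiusT f G
      = ∑ G with F ≤ G, ∑ F' with G ≤ F',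
          (-1 : ℝ) ^ #(F'.edgeFinset \ G.edgeFinset) * f n F' :=
        sum_congr rfl fun G _ => mobiusT_eq_sum f G
    _ = ∑ F', ∑ G with F ≤ G ∧ G ≤ F', (-1 : ℝ) ^ #(F'.edgeFinset \ G.edgeFinset) * f n F' := by
        refine sum_comm' fun G F' => ?_
        simp only [mem_filter, mem_univ, true_and, and_true]
    _ = ∑ F', (if F = F' then 1 else 0) * f n F' := by
        refine sum_congr rfl fun F' _ => ?_
        rw [← sum_mul]
        congr 1
        -- the `Fintype` instances on `Fin n` differ syntactically from the generic ones
        convert sum_neg_one_pow_card_edgeFinset_sdiff F F'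
    _ = f n F := by simp

noncomputable def flatConnectionMatrix (f : ∀ n, SimpleGraph (Fin n) → ℝ) (k : ℕ) :
    Matrix (SimpleGraph (Fin k)) (SimpleGraph (Fin k)) ℝ :=
  of fun F₁ F₂ => f k (F₁ ⊔ F₂)

theorem flatConnectionMatrix_eq (f : ∀ n, SimpleGraph (Fin n) → ℝ) (k : ℕ) :
    flatConnectionMatrix f k =
      zetaMatrix ℝ _ * diagonal (mobiusT f) * (zetaMatrix ℝ (SimpleGraph (Fin k)))ᴴ := by
  ext F₁ F₂
  rw [zetaMatrix_mul_diagonal_mul_conjTranspose_apply, flatConnectionMatrix, of_apply,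
    ← sum_ge_mobiusT_eq f (F₁ ⊔ F₂)]
  simp only [sup_le_iff]

theorem mobius_nonneg_iff_flatly_reflection_positive_general
    (f : ∀ n, SimpleGraph (Fin n) → ℝ) :
    (∀ (n : ℕ) (F : SimpleGraph (Fin n)), 0 ≤ mobiusT f F) ↔
    (∀ k : ℕ, (Matrix.of fun F₁ F₂ : SimpleGraph (Fin k) => f k (F₁ ⊔ F₂)).PosSemidef) :=
  forall_congr' fun k => by
    rw [← flatConnectionMatrix, flatConnectionMatrix_eq,
      posSemidef_zetaMatrix_mul_diagonal_mul_conjTranspose_iff]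

/-- An isolate-indifferent, normalized graph parameter has nonnegative Möbius transform
iff it is flatly reflection positive, i.e. all flat connection matrices are positive
semidefinite. -/
theorem mobius_nonneg_iff_flatly_reflection_positive
    (f : ∀ n, SimpleGraph (Fin n) → ℝ)
    (hii : IsolateIndifferent f) (hnorm : Normalized f) :
    (∀ (n : ℕ) (F : SimpleGraph (Fin n)), 0 ≤ mobiusT f F) ↔
    (∀ k : ℕ, (Matrix.of fun F₁ F₂ : SimpleGraph (Fin k) => f k (F₁ ⊔ F₂)).PosSemidef) :=
  mobius_nonneg_iff_flatly_reflection_positive_general f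
end
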